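/- Let G be a connected graph of order n and let H be a connected graph such that for every locating-dominating set B of minimum cardinality in H there exists a vertex u ∉ B with N(u) ∩ B = B. Then γ_{l-d}(G⊙H) = n·γ_{l-d}(H) + γ(G). -/

import Mathlib

open SimpleGraph

/-- The corona product `G ⊙ H`: one copy of `G` together with one copy of `H`
for each vertex of `G`, where the `i`-th vertex of `G` is joined by an edge to
every vertex of the `i`-th copy of `H`. -/
def corona {α β : Type*} (G : SimpleGraph α) (H : SimpleGraph β) :
    SimpleGraph (α ⊕ α × β) where
  Adj x y :=
    match x, y with
    | Sum.inl u, Sum.inl v => G.Adj u v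
    | Sum.inl u, Sum.inr q => u = q.1
    | Sum.inr p, Sum.inl v => p.1 = v
    | Sum.inr p, Sum.inr q => p.1 = q.1 ∧ H.Adj p.2 q.2
  symm := by
    constructor
    rintro (u | p) (v | q) h
    · exact h.symm
    · exact h.symm
    · exact h.symm
    · exact ⟨h.1.symm, h.2.symm⟩
  loopless := by
    constructor
    rintro (u | p) h
    · exact G.irrefl h
    · exact H.irrefl h.2

/-- `D` is a dominating set of `G`: every vertex outside `D` has a neighbor in `D`. -/
def IsDominatingSet {α : Type*} (G : SimpleGraph α) (D : Set α) : Prop :=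
  ∀ v ∉ D, ∃ u ∈ D, G.Adj v u

/-- The domination number of `G`. -/
noncomputable def dominationNumber {α : Type*} (G : SimpleGraph α) : ℕ :=
  sInf {n | ∃ D : Set α, IsDominatingSet G D ∧ D.ncard = n}

/-- `D` is a locating-dominating set of `G`: it is dominating and distinct
vertices outside `D` have distinct neighborhoods within `D`. -/
def IsLocatingDominating {α : Type*} (G : SimpleGraph α) (D : Set α) : Prop :=
  IsDominatingSet G D ∧
    ∀ u ∉ D, ∀ v ∉ D, u ≠ v → {x ∈ D | G.Adj u x} ≠ {x ∈ D | G.Adj v x}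

/-- The location-domination number of `G`. -/
noncomputable def locatingDominationNumber {α : Type*} (G : SimpleGraph α) : ℕ :=
  sInf {n | ∃ D : Set α, IsLocatingDominating G D ∧ D.ncard = n}

/-!
The upper bound comes from a minimum dominating set of `G` together with a minimum
locating-dominating set of `H` in every copy.

For the lower bound, let `S` be locating-dominating in `G ⊙ H` and `S_v` its part in the copy of
`H` at `v`. Each `S_v` separates the vertices of its copy outside it, and under the hypothesis on
`H` a separating set has at least `γ_{l-d}(H)` elements. If `|S_v| = γ_{l-d}(H)` and `v ∉ S`, then
`S_v` is a minimum locating-dominating set of `H`, and the vertex of the copy adjacent to all of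
`S_v` is told apart from `v` only by a `G`-neighbour of `v` in `S`. So the vertices of `G` in `S`
together with the `v` for which `|S_v| > γ_{l-d}(H)` dominate `G`, and counting gives
`|S| ≥ n γ_{l-d}(H) + γ(G)`.
-/

section Domination

variable {α : Type*} (G : SimpleGraph α)

def IsLocating (D : Set α) : Prop :=
  ∀ u ∉ D, ∀ v ∉ D, u ≠ v → {x ∈ D | G.Adj u x} ≠ {x ∈ D | G.Adj v x}

theorem IsLocatingDominating.isLocating {D : Set α} (hD : IsLocatingDominating G D) :
    IsLocating G D :=
  hD.2

theorem isLocatingDominating_univ : IsLocatingDominating G Set.univ :=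
  ⟨fun v hv => absurd (Set.mem_univ v) hv, fun u hu => absurd (Set.mem_univ u) hu⟩

theorem isDominatingSet_univ : IsDominatingSet G Set.univ := (isLocatingDominating_univ G).1

variable {G}

theorem locatingDominationNumber_le {D : Set α} (hD : IsLocatingDominating G D) :
    locatingDominationNumber G ≤ D.ncard :=
  Nat.sInf_le ⟨D, hD, rfl⟩

theorem dominationNumber_le {D : Set α} (hD : IsDominatingSet G D) :
    dominationNumber G ≤ D.ncard :=
  Nat.sInf_le ⟨D, hD, rfl⟩

variable (G)

theorem exists_isLocatingDominating_ncard_eq :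
    ∃ D, IsLocatingDominating G D ∧ D.ncard = locatingDominationNumber G :=
  Nat.sInf_mem (s := {n | ∃ D, IsLocatingDominating G D ∧ D.ncard = n})
    ⟨_, Set.univ, isLocatingDominating_univ G, rfl⟩

theorem exists_isDominatingSet_ncard_eq :
    ∃ D, IsDominatingSet G D ∧ D.ncard = dominationNumber G :=
  Nat.sInf_mem (s := {n | ∃ D, IsDominatingSet G D ∧ D.ncard = n})
    ⟨_, Set.univ, isDominatingSet_univ G, rfl⟩

variable {G}

theorem IsDominatingSet.nonempty [Nonempty α] {D : Set α} (hD : IsDominatingSet G D) :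
    D.Nonempty := by
  by_contra h
  obtain ⟨u, hu, -⟩ := hD (Classical.arbitrary α) fun hv => h ⟨_, hv⟩
  exact h ⟨u, hu⟩

theorem IsLocating.mono {D D' : Set α} (hD : IsLocating G D) (h : D ⊆ D') :
    IsLocating G D' := by
  intro u hu v hv huv heq
  have restrict : ∀ w, {x ∈ D | G.Adj w x} = D ∩ {x ∈ D' | G.Adj w x} := fun w => by
    ext x
    simp only [Set.mem_ofPred_eq, Set.mem_inter_iff]
    exact ⟨fun hx => ⟨hx.1, h hx.1, hx.2⟩, fun hx => ⟨hx.1, hx.2.2⟩⟩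
  exact hD u (fun hu' => hu (h hu')) v (fun hv' => hv (h hv')) huv
    (by rw [restrict, restrict, heq])

theorem IsLocating.eq_of_forall_not_adj {D : Set α} (hD : IsLocating G D) {u v : α}
    (hu : u ∉ D) (hv : v ∉ D) (hu' : ∀ x ∈ D, ¬G.Adj u x) (hv' : ∀ x ∈ D, ¬G.Adj v x) :
    u = v := by
  by_contra huv
  refine hD u hu v hv huv ?_
  ext x
  simp only [Set.mem_ofPred_eq]
  exact ⟨fun hx => absurd hx.2 (hu' x hx.1), fun hx => absurd hx.2 (hv' x hx.1)⟩

theorem IsLocating.isLocatingDominating_insert {D : Set α} (hD : IsLocating G D) {b c : α}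
    (hb : b ∉ D) (hb' : ∀ x ∈ D, ¬G.Adj b x) (hc : c = b ∨ G.Adj b c) :
    IsLocatingDominating G (insert c D) := by
  refine ⟨fun w hw => ?_, hD.mono (Set.subset_insert c D)⟩
  rw [Set.mem_insert_iff, not_or] at hw
  by_cases hwD : ∃ x ∈ D, G.Adj w x
  · obtain ⟨x, hx, hwx⟩ := hwD
    exact ⟨x, Set.mem_insert_of_mem c hx, hwx⟩
  push Not at hwD
  obtain rfl := hD.eq_of_forall_not_adj hw.2 hb hwD hb'
  exact ⟨c, Set.mem_insert c D, hc.resolve_left (Ne.symm hw.1)⟩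

/-- If `D` is not dominating, its unique undominated vertex `b` can be added. Were `insert b D`
minimum, `hmin` would give a vertex `u` adjacent to all of it; `insert u D` is then minimum too,
and `hmin` gives a second such vertex `u'`. But `D` cannot separate `u` from `u'`. -/
theorem locatingDominationNumber_le_ncard_of_isLocating [Finite α]
    (hmin : ∀ B : Set α, IsLocatingDominating G B → B.ncard = locatingDominationNumber G →
      ∃ u ∉ B, {x ∈ B | G.Adj u x} = B)
    {D : Set α} (hD : IsLocating G D) : locatingDominationNumber G ≤ D.ncard := by
  by_cases hdom : IsDominatingSet G D
  · exact locatingDominationNumber_le ⟨hdom, hD⟩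
  obtain ⟨b, hb, hb'⟩ : ∃ b ∉ D, ∀ x ∈ D, ¬G.Adj b x := by
    simpa [IsDominatingSet] using hdom
  have hLDb := hD.isLocatingDominating_insert hb hb' (Or.inl rfl)
  have hle := (locatingDominationNumber_le hLDb).trans_eq (Set.ncard_insert_of_notMem hb)
  by_contra! hlt
  obtain ⟨u, hu, hub⟩ := hmin _ hLDb (by rw [Set.ncard_insert_of_notMem hb]; omega)
  rw [Set.sep_eq_self_iff_mem_true] at hub
  rw [Set.mem_insert_iff, not_or] at hu
  have hLDu := hD.isLocatingDominating_insert hb hb' (Or.inr (hub b (Set.mem_insert b D)).symm)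
  obtain ⟨u', hu', hu'u⟩ := hmin _ hLDu (by rw [Set.ncard_insert_of_notMem hu.2]; omega)
  rw [Set.sep_eq_self_iff_mem_true] at hu'u
  rw [Set.mem_insert_iff, not_or] at hu'
  refine hD u hu.2 u' hu'.2 (Ne.symm hu'.1) ?_
  rw [Set.sep_eq_self_iff_mem_true.2 fun x hx => hub x (Set.mem_insert_of_mem b hx),
    Set.sep_eq_self_iff_mem_true.2 fun x hx => hu'u x (Set.mem_insert_of_mem u hx)]

end Domination

theorem ncard_eq_sum_ite {γ : Type*} [Fintype γ] (s : Set γ) [DecidablePred (· ∈ s)] :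
    s.ncard = ∑ x, if x ∈ s then 1 else 0 := by
  simp [Finset.sum_boole, Set.ncard_eq_toFinset_card']

theorem card_mul_add_ncard_lt_le_sum {ι : Type*} [Fintype ι] {f : ι → ℕ} {c : ℕ}
    (h : ∀ i, c ≤ f i) : Fintype.card ι * c + {i | c < f i}.ncard ≤ ∑ i, f i := by
  classical
  rw [ncard_eq_sum_ite, ← smul_eq_mul, ← Finset.card_univ, ← Finset.sum_const,
    ← Finset.sum_add_distrib]
  refine Finset.sum_le_sum fun i _ => ?_
  have := h i
  split_ifs with hi <;> simp only [Set.mem_ofPred_eq] at hi <;> omega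

section Corona

variable {α β : Type*} {G : SimpleGraph α} {H : SimpleGraph β}

@[simp] theorem corona_adj_inl_inl {u v : α} :
    (corona G H).Adj (Sum.inl u) (Sum.inl v) ↔ G.Adj u v := Iff.rfl

@[simp] theorem corona_adj_inl_inr {u : α} {q : α × β} :
    (corona G H).Adj (Sum.inl u) (Sum.inr q) ↔ u = q.1 := Iff.rfl

@[simp] theorem corona_adj_inr_inl {p : α × β} {v : α} :
    (corona G H).Adj (Sum.inr p) (Sum.inl v) ↔ p.1 = v := Iff.rfl

@[simp] theorem corona_adj_inr_inr {p q : α × β} :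
    (corona G H).Adj (Sum.inr p) (Sum.inr q) ↔ p.1 = q.1 ∧ H.Adj p.2 q.2 := Iff.rfl

def copyTrace (S : Set (α ⊕ α × β)) (v : α) : Set β := {b | Sum.inr (v, b) ∈ S}

@[simp] theorem mem_copyTrace {S : Set (α ⊕ α × β)} {v : α} {b : β} :
    b ∈ copyTrace S v ↔ Sum.inr (v, b) ∈ S := Iff.rfl

theorem isLocating_copyTrace {S : Set (α ⊕ α × β)} (hS : IsLocating (corona G H) S) (v : α) :
    IsLocating H (copyTrace S v) := by
  intro b hb b' hb' hne heq
  refine hS (Sum.inr (v, b)) hb (Sum.inr (v, b')) hb' (by simpa using hne) ?_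
  ext (w | ⟨w, x⟩)
  · simp
  · obtain rfl | hvw := eq_or_ne v w
    · simpa using Set.ext_iff.mp heq x
    · simp [hvw]

theorem isLocatingDominating_copyTrace {S : Set (α ⊕ α × β)}
    (hS : IsLocatingDominating (corona G H) S) {v : α} (hv : Sum.inl v ∉ S) :
    IsLocatingDominating H (copyTrace S v) := by
  refine ⟨fun b hb => ?_, isLocating_copyTrace hS.isLocating v⟩
  obtain ⟨w | ⟨w, x⟩, hwS, hadj⟩ := hS.1 (Sum.inr (v, b)) hb
  · obtain rfl : v = w := hadj
    exact absurd hwS hv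
  · obtain ⟨rfl, hbx⟩ := hadj
    exact ⟨x, hwS, hbx⟩

/-- Otherwise `inl v` and the vertex `(v, u)` given by `hmin` have the same trace on `S`, namely
the part of `S` in the copy of `H` at `v`. -/
theorem IsLocatingDominating.exists_adj_inl_mem
    (hmin : ∀ B : Set β, IsLocatingDominating H B → B.ncard = locatingDominationNumber H →
      ∃ u ∉ B, {x ∈ B | H.Adj u x} = B)
    {S : Set (α ⊕ α × β)} (hS : IsLocatingDominating (corona G H) S) {v : α}
    (hv : Sum.inl v ∉ S) (hcard : (copyTrace S v).ncard = locatingDominationNumber H) :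
    ∃ w, Sum.inl w ∈ S ∧ G.Adj v w := by
  by_contra! hno
  obtain ⟨u, hu, hub⟩ := hmin _ (isLocatingDominating_copyTrace hS hv) hcard
  rw [Set.sep_eq_self_iff_mem_true] at hub
  refine hS.2 (Sum.inl v) hv (Sum.inr (v, u)) hu (by simp) ?_
  ext (w | ⟨w, x⟩)
  · simpa using fun hw => iff_of_false (hno w hw) (by rintro rfl; exact hv hw)
  · simpa using fun hw (hvw : v = w) => hub x (hvw ▸ hw)

theorem ncard_eq_ncard_preimage_inl_add_sum_copyTrace [Fintype α] [Fintype β]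
    (S : Set (α ⊕ α × β)) :
    S.ncard = (Sum.inl ⁻¹' S).ncard + ∑ v, (copyTrace S v).ncard := by
  classical
  simp only [ncard_eq_sum_ite, Fintype.sum_sum_type, Fintype.sum_prod_type, Set.mem_preimage,
    mem_copyTrace]

theorem card_mul_add_dominationNumber_le_ncard [Fintype α] [Fintype β]
    (hmin : ∀ B : Set β, IsLocatingDominating H B → B.ncard = locatingDominationNumber H →
      ∃ u ∉ B, {x ∈ B | H.Adj u x} = B)
    {S : Set (α ⊕ α × β)} (hS : IsLocatingDominating (corona G H) S) :
    Fintype.card α * locatingDominationNumber H + dominationNumber G ≤ S.ncard := by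
  have hf : ∀ v, locatingDominationNumber H ≤ (copyTrace S v).ncard := fun v =>
    locatingDominationNumber_le_ncard_of_isLocating hmin (isLocating_copyTrace hS.isLocating v)
  have hdom : IsDominatingSet G
      (Sum.inl ⁻¹' S ∪ {v | locatingDominationNumber H < (copyTrace S v).ncard}) := by
    intro v hv
    simp only [Set.mem_union, Set.mem_preimage, Set.mem_ofPred_eq, not_or, not_lt] at hv
    obtain ⟨w, hw, hvw⟩ := hS.exists_adj_inl_mem hmin hv.1 (le_antisymm hv.2 (hf v))
    exact ⟨w, Or.inl hw, hvw⟩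
  have hG := (dominationNumber_le hdom).trans (Set.ncard_union_le _ _)
  have hH := card_mul_add_ncard_lt_le_sum hf
  rw [ncard_eq_ncard_preimage_inl_add_sum_copyTrace S]
  omega

def coronaSet (D : Set α) (B : Set β) : Set (α ⊕ α × β) :=
  Sum.inl '' D ∪ Sum.inr '' ((Set.univ : Set α) ×ˢ B)

@[simp] theorem inl_mem_coronaSet {D : Set α} {B : Set β} {v : α} :
    Sum.inl v ∈ coronaSet D B ↔ v ∈ D := by
  simp [coronaSet]

@[simp] theorem inr_mem_coronaSet {D : Set α} {B : Set β} {p : α × β} :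
    Sum.inr p ∈ coronaSet D B ↔ p.2 ∈ B := by
  simp [coronaSet]

theorem IsDominatingSet.isLocatingDominating_coronaSet [Nonempty β] {D : Set α}
    (hD : IsDominatingSet G D) {B : Set β} (hB : IsLocatingDominating H B) :
    IsLocatingDominating (corona G H) (coronaSet D B) := by
  obtain ⟨b₀, hb₀⟩ := hB.1.nonempty
  refine ⟨?_, ?_⟩
  · rintro (v | ⟨v, b⟩) hv
    · obtain ⟨u, hu, hvu⟩ := hD v (by simpa using hv)
      exact ⟨Sum.inl u, by simpa using hu, hvu⟩
    · obtain ⟨x, hx, hbx⟩ := hB.1 b (by simpa using hv)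
      exact ⟨Sum.inr (v, x), by simpa using hx, rfl, hbx⟩
  have inl_inr : ∀ v ∉ D, ∀ v' b', {x ∈ coronaSet D B | (corona G H).Adj (Sum.inl v) x} ≠
      {x ∈ coronaSet D B | (corona G H).Adj (Sum.inr (v', b')) x} := by
    intro v hv v' b' heq
    obtain ⟨u, hu, hvu⟩ := hD v hv
    obtain ⟨rfl, -⟩ : v' = v ∧ H.Adj b' b₀ := by
      simpa [hb₀] using Set.ext_iff.mp heq (Sum.inr (v, b₀))
    have hu' : G.Adj v' u ↔ v' = u := by simpa [hu] using Set.ext_iff.mp heq (Sum.inl u)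
    exact hvu.ne (hu'.1 hvu)
  rintro (v | ⟨v, b⟩) hv (v' | ⟨v', b'⟩) hv' hne heq <;>
    simp only [inl_mem_coronaSet, inr_mem_coronaSet, ne_eq, Sum.inl.injEq, Sum.inr.injEq,
      Prod.mk.injEq, reduceCtorEq, not_false_eq_true, not_and] at hv hv' hne
  · obtain rfl : v' = v := by simpa [hb₀] using Set.ext_iff.mp heq (Sum.inr (v, b₀))
    exact hne rfl
  · exact inl_inr v hv v' b' heq
  · exact inl_inr v' hv' v b heq.symm
  · obtain ⟨x, hx, hbx⟩ := hB.1 b hv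
    obtain ⟨rfl, -⟩ : v' = v ∧ H.Adj b' x := by
      simpa [hx, hbx] using Set.ext_iff.mp heq (Sum.inr (v, x))
    refine hB.2 b hv b' hv' (hne rfl) (Set.ext fun y => ?_)
    simpa using Set.ext_iff.mp heq (Sum.inr (v', y))

theorem ncard_coronaSet [Fintype α] [Fintype β] (D : Set α) (B : Set β) :
    (coronaSet D B).ncard = Fintype.card α * B.ncard + D.ncard := by
  have hinl : Sum.inl ⁻¹' coronaSet D B = D := by ext; simp
  have hinr : ∀ v, copyTrace (coronaSet D B) v = B := fun v => by ext; simp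
  simp [ncard_eq_ncard_preimage_inl_add_sum_copyTrace, hinl, hinr, add_comm]

theorem locatingDominationNumber_corona_le [Fintype α] [Fintype β] [Nonempty β]
    (G : SimpleGraph α) (H : SimpleGraph β) :
    locatingDominationNumber (corona G H)
      ≤ Fintype.card α * locatingDominationNumber H + dominationNumber G := by
  obtain ⟨D, hD, hDcard⟩ := exists_isDominatingSet_ncard_eq G
  obtain ⟨B, hB, hBcard⟩ := exists_isLocatingDominating_ncard_eq H
  calc locatingDominationNumber (corona G H)
      ≤ (coronaSet D B).ncard :=
        locatingDominationNumber_le (hD.isLocatingDominating_coronaSet hB)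
    _ = _ := by rw [ncard_coronaSet, hBcard, hDcard]

end Corona

theorem stmt_14_general {α β : Type*} [Fintype α] [Fintype β]
    (G : SimpleGraph α) (H : SimpleGraph β) (hH : H.Connected)
    (hB : ∀ B : Set β, IsLocatingDominating H B → B.ncard = locatingDominationNumber H →
      ∃ u ∉ B, {x ∈ B | H.Adj u x} = B) :
    locatingDominationNumber (corona G H)
      = Fintype.card α * locatingDominationNumber H + dominationNumber G := by
  have : Nonempty β := hH.nonempty
  obtain ⟨S, hS, hScard⟩ := exists_isLocatingDominating_ncard_eq (corona G H)
  refine (locatingDominationNumber_corona_le G H).antisymm ?_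
  rw [← hScard]
  exact card_mul_add_dominationNumber_le_ncard hB hS

/-- Let `G` be a connected graph of order `n` and `H` a connected graph such
that every locating-dominating set `B` of minimum cardinality has a vertex
`u ∉ B` with `N(u) ∩ B = B`. Then `γ_{l-d}(G ⊙ H) = n γ_{l-d}(H) + γ(G)`. -/
theorem stmt_14 {α β : Type*} [Fintype α] [Fintype β]
    (G : SimpleGraph α) (H : SimpleGraph β) (hG : G.Connected) (hH : H.Connected)
    (hB : ∀ B : Set β, IsLocatingDominating H B → B.ncard = locatingDominationNumber H →
      ∃ u ∉ B, {x ∈ B | H.Adj u x} = B) :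
    locatingDominationNumber (corona G H)
      = Fintype.card α * locatingDominationNumber H + dominationNumber G :=
  stmt_14_general G H hH hB
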